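/- arXiv:1508.04385 — 3 statements merged into one kernel-verified Lean document; each statement's English description precedes it below -/
import Mathlib

section
/- Let G be a group acting on sets X and Y, with the action on X transitive and the diagonal action on X × Y free. Fix x ∈ X and let G_x be the stabilizer of x. Then the map Y → X × Y, y ↦ (x, y), induces a bijection between the orbit space Y/G_x (quotient of Y by the orbit relation of the G_x-action) and the orbit space (X × Y)/G (quotient of X × Y by the orbit relation of the diagonal G-action). -/
/-! Every `G`-orbit in `X × Y` meets the fibre `{x} × Y`, by transitivity on `X`, and two points
`(x, y)`, `(x, y')` of that fibre are `G`-related exactly when the relating element fixes `x`. -/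

namespace MulAction

variable {G X Y : Type*} [Group G] [MulAction G X] [MulAction G Y]

theorem orbitRel_stabilizer_iff_orbitRel_prod_mk (x : X) (y y' : Y) :
    orbitRel (stabilizer G x) Y y y' ↔ orbitRel G (X × Y) (x, y) (x, y') := by
  simp only [orbitRel_apply, mem_orbit_iff]
  constructor
  · rintro ⟨g, hg⟩
    exact ⟨g, Prod.ext g.2 hg⟩
  · rintro ⟨g, hg⟩
    exact ⟨⟨g, congrArg Prod.fst hg⟩, congrArg Prod.snd hg⟩

variable (G) in
theorem exists_orbitRel_prod_mk [IsPretransitive G X] (x : X) (p : X × Y) :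
    ∃ y : Y, orbitRel G (X × Y) (x, y) p := by
  obtain ⟨g, hg⟩ := exists_smul_eq G p.1 x
  refine ⟨g • p.2, orbitRel_apply.2 ⟨g, ?_⟩⟩
  simp [Prod.smul_def, hg]

noncomputable def stabilizerOrbitsEquivProdOrbits [IsPretransitive G X] (x : X) :
    Quotient (orbitRel (stabilizer G x) Y) ≃ Quotient (orbitRel G (X × Y)) :=
  Equiv.ofBijective
    (Quotient.map (fun y => (x, y)) fun y y' =>
      (orbitRel_stabilizer_iff_orbitRel_prod_mk x y y').1)
    ⟨by
      rintro ⟨y⟩ ⟨y'⟩ h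
      exact Quotient.sound ((orbitRel_stabilizer_iff_orbitRel_prod_mk x y y').2 (Quotient.exact h)),
    by
      rintro ⟨p⟩
      obtain ⟨y, hy⟩ := exists_orbitRel_prod_mk G x p
      exact ⟨Quotient.mk _ y, Quotient.sound hy⟩⟩

end MulAction

theorem orbitSpace_equiv_of_transitive_of_diagonal_free_general
    {G X Y : Type*} [Group G] [MulAction G X] [MulAction G Y]
    (htrans : ∀ x x' : X, ∃ g : G, g • x = x')
    (x : X) :
    ∃ e : Quotient (MulAction.orbitRel (MulAction.stabilizer G x) Y) ≃
        Quotient (MulAction.orbitRel G (X × Y)),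
      ∀ y : Y, e (Quotient.mk _ y) = Quotient.mk _ (x, y) := by
  have : MulAction.IsPretransitive G X := ⟨htrans⟩
  exact ⟨MulAction.stabilizerOrbitsEquivProdOrbits x, fun _ => rfl⟩

/-- Let a group `G` act on sets `X` and `Y`, with the action on `X` transitive and the
diagonal action on `X × Y` free. For `x : X` with stabilizer `G_x`, the map `y ↦ (x, y)`
induces a bijection between the orbit spaces `Y / G_x` and `(X × Y) / G`. -/
theorem orbitSpace_equiv_of_transitive_of_diagonal_free
    {G X Y : Type*} [Group G] [MulAction G X] [MulAction G Y]
    (htrans : ∀ x x' : X, ∃ g : G, g • x = x')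
    (hfree : ∀ (g : G) (p : X × Y), g • p = p → g = 1)
    (x : X) :
    ∃ e : Quotient (MulAction.orbitRel (MulAction.stabilizer G x) Y) ≃
        Quotient (MulAction.orbitRel G (X × Y)),
      ∀ y : Y, e (Quotient.mk _ y) = Quotient.mk _ (x, y) :=
  orbitSpace_equiv_of_transitive_of_diagonal_free_general htrans x
end

section
/- Let G be a compact topological group acting continuously on compact Hausdorff topological spaces X and Y. Suppose the action of G on X is transitive and the diagonal action of G on X × Y is free. Then for any x ∈ X, with G_x the stabilizer subgroup of x, the map y ↦ (x,y) induces a homeomorphism from the orbit space Y/G_x (with the quotient topology) onto the orbit space (X × Y)/G (with the quotient topology). -/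
/-!
Since `G` acts transitively on `X`, every orbit of `X × Y` meets the slice `{x} × Y`, and two
points of the slice lie in the same orbit exactly when they differ by an element of `G_x`; so
`y ↦ (x, y)` induces a continuous bijection `Y / G_x → (X × Y) / G`. Its source is compact, and
its target is Hausdorff because a compact group acts properly on a Hausdorff space.
-/

open MulAction

theorem properSMul_of_compactSpace (G Z : Type*) [Group G] [TopologicalSpace G] [CompactSpace G]
    [TopologicalSpace Z] [T2Space Z] [MulAction G Z] [ContinuousSMul G Z] : ProperSMul G Z :=
  ⟨isProperMap_of_comp_of_t2 (continuous_smul.prodMk continuous_snd) continuous_snd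
    isProperMap_snd_of_compactSpace⟩

section Slice

variable {G X Y : Type*} [Group G] [MulAction G X] [MulAction G Y]

def sliceOrbitMap (x : X) :
    Quotient (orbitRel (stabilizer G x) Y) → Quotient (orbitRel G (X × Y)) :=
  Quotient.map' (fun y ↦ (x, y)) fun _ _ ⟨g, hg⟩ ↦ ⟨g, Prod.ext g.2 hg⟩

theorem sliceOrbitMap_injective (x : X) :
    Function.Injective (sliceOrbitMap (G := G) (Y := Y) x) := by
  rintro ⟨a⟩ ⟨b⟩ h
  obtain ⟨g, hg⟩ := Quotient.exact h
  exact Quotient.sound ⟨⟨g, congrArg Prod.fst hg⟩, congrArg Prod.snd hg⟩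

theorem sliceOrbitMap_surjective [IsPretransitive G X] (x : X) :
    Function.Surjective (sliceOrbitMap (G := G) (Y := Y) x) := by
  rintro ⟨x', y⟩
  obtain ⟨g, hg⟩ := exists_smul_eq G x' x
  exact ⟨Quotient.mk _ (g • y), Quotient.sound ⟨g, Prod.ext hg rfl⟩⟩

variable [TopologicalSpace X] [TopologicalSpace Y]

theorem continuous_sliceOrbitMap (x : X) : Continuous (sliceOrbitMap (G := G) (Y := Y) x) :=
  continuous_quot_mk.comp (continuous_const.prodMk continuous_id) |>.quotient_lift _

noncomputable def sliceOrbitHomeomorph [TopologicalSpace G] [CompactSpace G] [T2Space X]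
    [CompactSpace Y] [T2Space Y] [ContinuousSMul G X] [ContinuousSMul G Y] [IsPretransitive G X]
    (x : X) : Quotient (orbitRel (stabilizer G x) Y) ≃ₜ Quotient (orbitRel G (X × Y)) :=
  haveI := properSMul_of_compactSpace G (X × Y)
  (continuous_sliceOrbitMap x).homeoOfEquivCompactToT2
    (f := .ofBijective _ ⟨sliceOrbitMap_injective x, sliceOrbitMap_surjective x⟩)

end Slice

theorem orbitSpace_homeomorph_of_transitive_of_diagonal_free_general
    {G X Y : Type*} [Group G] [TopologicalSpace G] [CompactSpace G]
    [TopologicalSpace X] [T2Space X]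
    [TopologicalSpace Y] [CompactSpace Y] [T2Space Y]
    [MulAction G X] [ContinuousSMul G X]
    [MulAction G Y] [ContinuousSMul G Y]
    (htrans : ∀ x x' : X, ∃ g : G, g • x = x')
    (x : X) :
    ∃ e : Quotient (MulAction.orbitRel (MulAction.stabilizer G x) Y) ≃ₜ
        Quotient (MulAction.orbitRel G (X × Y)),
      ∀ y : Y, e (Quotient.mk _ y) = Quotient.mk _ (x, y) :=
  haveI : IsPretransitive G X := ⟨htrans⟩
  ⟨sliceOrbitHomeomorph x, fun _ ↦ rfl⟩

/-- Topological version of Kapovitch–Ziller's Lemma 1.2: if a compact topological group `G`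
acts continuously on compact Hausdorff spaces `X` and `Y`, the action on `X` is transitive
and the diagonal action on `X × Y` is free, then for any `x : X` the map `y ↦ (x, y)`
induces a homeomorphism `Y / G_x ≃ₜ (X × Y) / G` of orbit spaces with their quotient
topologies. -/
theorem orbitSpace_homeomorph_of_transitive_of_diagonal_free
    {G X Y : Type*} [Group G] [TopologicalSpace G] [IsTopologicalGroup G] [CompactSpace G]
    [TopologicalSpace X] [CompactSpace X] [T2Space X]
    [TopologicalSpace Y] [CompactSpace Y] [T2Space Y]
    [MulAction G X] [ContinuousSMul G X]
    [MulAction G Y] [ContinuousSMul G Y]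
    (htrans : ∀ x x' : X, ∃ g : G, g • x = x')
    (hfree : ∀ (g : G) (p : X × Y), g • p = p → g = 1)
    (x : X) :
    ∃ e : Quotient (MulAction.orbitRel (MulAction.stabilizer G x) Y) ≃ₜ
        Quotient (MulAction.orbitRel G (X × Y)),
      ∀ y : Y, e (Quotient.mk _ y) = Quotient.mk _ (x, y) :=
  orbitSpace_homeomorph_of_transitive_of_diagonal_free_general htrans x
end

section
/- Let Γ be a finite simple graph with vertex set V and let k ≥ 1. Then Γ admits a proper colouring with k colours if and only if there exists a function c : V → ℂ with c(v) ≠ 0 for all v ∈ V such that for every edge {u, v} of Γ one has Σ_{l=1}^{k} c(u)^{k−l} c(v)^{l−1} = 0. -/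
/-!
The weight sum `h(x, y) = ∑_{l=1}^{k} x^(k-l) y^(l-1)` satisfies `h(x, y) (y - x) = y^k - x^k` and
`h(x, x) = k x^(k-1)`, so for `x ≠ 0` it vanishes exactly when `x ≠ y` and `x^k = y^k`. A colouring
by the `k` distinct `k`-th roots of unity therefore gives admissible weights. Conversely, dividing
each `c v` by a `k`-th root of `c v ^ k` chosen once for each value of `c v ^ k` yields `k`-th roots
of unity, and adjacent vertices, whose weights have equal `k`-th powers but differ, stay distinct.
-/

open Finset

section WeightSum

variable {R : Type*} [CommRing R]

theorem sum_Icc_pow_mul_pow_eq_geom_sum₂ (k : ℕ) (x y : R) :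
    ∑ l ∈ Icc 1 k, x ^ (k - l) * y ^ (l - 1) = ∑ i ∈ range k, y ^ i * x ^ (k - 1 - i) := by
  rw [← Ico_add_one_right_eq_Icc, sum_Ico_eq_sum_range, Nat.add_sub_cancel]
  refine sum_congr rfl fun i _ => ?_
  rw [mul_comm, Nat.add_sub_cancel_left, Nat.sub_sub, add_comm]

theorem sum_Icc_pow_mul_pow_mul_sub (k : ℕ) (x y : R) :
    (∑ l ∈ Icc 1 k, x ^ (k - l) * y ^ (l - 1)) * (y - x) = y ^ k - x ^ k := by
  rw [sum_Icc_pow_mul_pow_eq_geom_sum₂, geom_sum₂_mul]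

theorem sum_Icc_pow_mul_pow_self (k : ℕ) (x : R) :
    ∑ l ∈ Icc 1 k, x ^ (k - l) * x ^ (l - 1) = k * x ^ (k - 1) := by
  rw [sum_Icc_pow_mul_pow_eq_geom_sum₂, geom_sum₂_self]

end WeightSum

theorem sum_Icc_pow_mul_pow_eq_zero_iff {K : Type*} [Field K] [CharZero K] {k : ℕ} (hk : k ≠ 0)
    {x : K} (hx : x ≠ 0) (y : K) :
    ∑ l ∈ Icc 1 k, x ^ (k - l) * y ^ (l - 1) = 0 ↔ x ≠ y ∧ x ^ k = y ^ k := by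
  rcases eq_or_ne x y with rfl | hxy
  · simp [sum_Icc_pow_mul_pow_self, hk, hx]
  · rw [← mul_left_inj' (sub_ne_zero.mpr hxy.symm), sum_Icc_pow_mul_pow_mul_sub, zero_mul,
      sub_eq_zero, eq_comm]
    exact (and_iff_right hxy).symm

theorem SimpleGraph.colorable_card_iff_exists_mem {V α : Type*} (G : SimpleGraph V) (s : Finset α) :
    G.Colorable #s ↔ ∃ c : V → α, (∀ v, c v ∈ s) ∧ ∀ u v, G.Adj u v → c u ≠ c v := by
  constructor
  · intro h
    let C : G.Coloring s := h.toColoring (Fintype.card_coe s).ge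
    exact ⟨fun v => C v, fun v => (C v).2, fun u v huv => Subtype.coe_ne_coe.mpr (C.valid huv)⟩
  · rintro ⟨c, hcs, hc⟩
    let C : G.Coloring s :=
      .mk (fun v => ⟨c v, hcs v⟩) fun huv => Subtype.coe_ne_coe.mp (hc _ _ huv)
    exact Fintype.card_coe s ▸ C.colorable

theorem SimpleGraph.colorable_iff_exists_pow_eq_one {V K : Type*} [CommRing K] [IsDomain K]
    (G : SimpleGraph V) {k : ℕ} {ζ : K} (hζ : IsPrimitiveRoot ζ k) (hk : k ≠ 0) :
    G.Colorable k ↔ ∃ c : V → K, (∀ v, c v ^ k = 1) ∧ ∀ u v, G.Adj u v → c u ≠ c v := by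
  nth_rw 1 [← hζ.card_nthRootsFinset]
  simp_rw [G.colorable_card_iff_exists_mem, Polynomial.mem_nthRootsFinset (Nat.pos_of_ne_zero hk)]

theorem IsAlgClosed.exists_pow_eq_one_separating_pow_fibers {K : Type*} [Field K] [IsAlgClosed K]
    {k : ℕ} (hk : k ≠ 0) :
    ∃ d : K → K, (∀ x, x ≠ 0 → d x ^ k = 1) ∧ ∀ x y, x ^ k = y ^ k → x ≠ y → d x ≠ d y := by
  choose r hr using fun w : K => IsAlgClosed.exists_pow_nat_eq w (Nat.pos_of_ne_zero hk)
  refine ⟨fun x => x / r (x ^ k), fun x hx => ?_, fun x y hxy hne hd => hne ?_⟩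
  · rw [div_pow, hr, div_self (pow_ne_zero k hx)]
  · dsimp only at hd
    rw [← hxy] at hd
    by_cases hr0 : r (x ^ k) = 0
    · have hx0 : x ^ k = 0 := by rw [← hr (x ^ k), hr0, zero_pow hk]
      rw [(pow_eq_zero_iff hk).mp hx0, (pow_eq_zero_iff hk).mp (hxy.symm.trans hx0)]
    · exact (div_left_inj' hr0).mp hd

theorem colorable_iff_exists_nowhere_zero_complex_weights_general
    {V : Type*} (Γ : SimpleGraph V) (k : ℕ) (hk : 1 ≤ k) :
    Γ.Colorable k ↔
      ∃ c : V → ℂ, (∀ v : V, c v ≠ 0) ∧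
        ∀ u v : V, Γ.Adj u v →
          ∑ l ∈ Finset.Icc 1 k, c u ^ (k - l) * c v ^ (l - 1) = 0 := by
  have hk0 : k ≠ 0 := Nat.one_le_iff_ne_zero.mp hk
  rw [Γ.colorable_iff_exists_pow_eq_one (Complex.isPrimitiveRoot_exp k hk0) hk0]
  constructor
  · rintro ⟨c, hc1, hc⟩
    have hc0 (v : V) : c v ≠ 0 := fun h => by simpa [h, hk0] using hc1 v
    exact ⟨c, hc0, fun u v huv => (sum_Icc_pow_mul_pow_eq_zero_iff hk0 (hc0 u) _).mpr
      ⟨hc u v huv, (hc1 u).trans (hc1 v).symm⟩⟩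
  · rintro ⟨c, hc0, hsum⟩
    obtain ⟨d, hd1, hd⟩ := IsAlgClosed.exists_pow_eq_one_separating_pow_fibers (K := ℂ) hk0
    refine ⟨d ∘ c, fun v => hd1 _ (hc0 v), fun u v huv => ?_⟩
    obtain ⟨hne, hpow⟩ := (sum_Icc_pow_mul_pow_eq_zero_iff hk0 (hc0 u) _).mp (hsum u v huv)
    exact hd _ _ hpow hne

/-- A finite simple graph `Γ` is properly `k`-colourable (`k ≥ 1`) iff there is a nowhere
vanishing function `c : V → ℂ` such that `∑_{l=1}^{k} c(u)^{k-l} c(v)^{l-1} = 0` for every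
edge `{u, v}` of `Γ`. -/
theorem colorable_iff_exists_nowhere_zero_complex_weights
    {V : Type*} [Fintype V] (Γ : SimpleGraph V) (k : ℕ) (hk : 1 ≤ k) :
    Γ.Colorable k ↔
      ∃ c : V → ℂ, (∀ v : V, c v ≠ 0) ∧
        ∀ u v : V, Γ.Adj u v →
          ∑ l ∈ Finset.Icc 1 k, c u ^ (k - l) * c v ^ (l - 1) = 0 :=
  colorable_iff_exists_nowhere_zero_complex_weights_general Γ k hk
end
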